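/- arXiv:math/0107036 — 3 statements merged into one kernel-verified Lean document; each statement's English description precedes it below -/
import Mathlib

section
/- Let μ be a Borel probability measure on ℝ and let w be its Stieltjes transform. Then for all real numbers a < b one has lim_{ε → 0⁺} (1/π) ∫_a^b Im(w(x + iε)) dx = μ((a,b)) + (1/2) μ({a}) + (1/2) μ({b}). -/
/-! The imaginary part of `w (x + iε)` is the Poisson smoothing `∫ ε / ((t - x)² + ε²) dμ(t)` of
`μ`. Integrating over `x ∈ [a, b]` and swapping the integrals turns it into
`∫ (arctan ((b - t) / ε) - arctan ((a - t) / ε)) dμ(t)`. The integrand is bounded by `π` and tends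
to `π (sign (b - t) - sign (a - t)) / 2`, which is `π` on `(a, b)`, `π / 2` at `a` and `b` and `0`
elsewhere, so dominated convergence gives the limit. -/

open MeasureTheory Filter Topology Set Real

lemma Complex.im_inv_ofReal_sub_add_mul_I (t x ε : ℝ) :
    ((t : ℂ) - (x + ε * Complex.I))⁻¹.im = ε / ((t - x) ^ 2 + ε ^ 2) := by
  simp only [inv_im, normSq_apply, sub_re, sub_im, add_re, add_im, mul_re, mul_im, ofReal_re,
    ofReal_im, I_re, I_im, mul_zero, mul_one, add_zero, zero_add, zero_sub, sub_self, mul_neg,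
    neg_mul, neg_neg]
  ring_nf

lemma Complex.norm_inv_ofReal_sub_le (t : ℝ) {z : ℂ} (hz : z.im ≠ 0) :
    ‖((t : ℂ) - z)⁻¹‖ ≤ |z.im|⁻¹ := by
  rw [norm_inv]
  refine inv_anti₀ (abs_pos.mpr hz) ?_
  calc |z.im| = |((t : ℂ) - z).im| := by simp
    _ ≤ ‖(t : ℂ) - z‖ := Complex.abs_im_le_norm _

lemma integrable_inv_ofReal_sub (μ : Measure ℝ) [IsFiniteMeasure μ] {z : ℂ} (hz : z.im ≠ 0) :
    Integrable (fun t : ℝ => ((t : ℂ) - z)⁻¹) μ := by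
  have hne (t : ℝ) : (t : ℂ) - z ≠ 0 := fun h => hz (by simpa using (congrArg Complex.im h).symm)
  refine Integrable.of_bound (Continuous.inv₀ (by fun_prop) hne).aestronglyMeasurable |z.im|⁻¹ ?_
  exact ae_of_all _ fun t => Complex.norm_inv_ofReal_sub_le t hz

lemma im_integral_inv_ofReal_sub_add_mul_I (μ : Measure ℝ) [IsFiniteMeasure μ] (x : ℝ) {ε : ℝ}
    (hε : ε ≠ 0) :
    (∫ t, ((t : ℂ) - (x + ε * Complex.I))⁻¹ ∂μ).im = ∫ t, ε / ((t - x) ^ 2 + ε ^ 2) ∂μ := by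
  calc _ = ∫ t, ((t : ℂ) - (x + ε * Complex.I))⁻¹.im ∂μ :=
        (integral_im (integrable_inv_ofReal_sub μ (by simpa using hε))).symm
    _ = _ := by simp_rw [Complex.im_inv_ofReal_sub_add_mul_I]

lemma div_sq_add_sq_le_inv (u : ℝ) {ε : ℝ} (hε : 0 < ε) : ε / (u ^ 2 + ε ^ 2) ≤ ε⁻¹ := by
  rw [div_le_iff₀ (by positivity), inv_mul_eq_div, le_div_iff₀ hε]
  nlinarith [sq_nonneg u]

lemma integral_div_sq_add_sq_eq_arctan_sub (t a b : ℝ) {ε : ℝ} (hε : ε ≠ 0) :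
    ∫ x in a..b, ε / ((t - x) ^ 2 + ε ^ 2) = arctan ((b - t) / ε) - arctan ((a - t) / ε) := by
  have hint : IntervalIntegrable (fun x => ε / ((t - x) ^ 2 + ε ^ 2)) volume a b :=
    (continuous_const.div (by fun_prop) fun x => by positivity).intervalIntegrable a b
  refine intervalIntegral.integral_eq_sub_of_hasDerivAt (f := fun x => arctan ((x - t) / ε))
    (fun x _ => ?_) hint
  refine ((hasDerivAt_arctan _).comp x (((hasDerivAt_id' x).sub_const t).div_const ε)).congr_deriv ?_
  field_simp
  ring

lemma integral_im_integral_inv_ofReal_sub_add_mul_I (μ : Measure ℝ) [IsFiniteMeasure μ]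
    (a b : ℝ) {ε : ℝ} (hε : 0 < ε) :
    ∫ x in a..b, (∫ t, ((t : ℂ) - (x + ε * Complex.I))⁻¹ ∂μ).im
      = ∫ t, (arctan ((b - t) / ε) - arctan ((a - t) / ε)) ∂μ := by
  simp_rw [im_integral_inv_ofReal_sub_add_mul_I μ _ hε.ne',
    ← integral_div_sq_add_sq_eq_arctan_sub _ a b hε.ne']
  have : IsFiniteMeasure (volume.restrict (uIoc a b)) :=
    ⟨by
      rw [Measure.restrict_apply_univ]
      exact (measure_mono uIoc_subset_uIcc).trans_lt isCompact_uIcc.measure_lt_top⟩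
  refine intervalIntegral_integral_swap (Integrable.of_bound ?_ ε⁻¹ ?_)
  · exact (continuous_const.div (by fun_prop) fun p => by positivity).aestronglyMeasurable
  · refine ae_of_all _ fun p => ?_
    dsimp only [Function.uncurry]
    rw [Real.norm_of_nonneg (by positivity)]
    exact div_sq_add_sq_le_inv _ hε

lemma abs_arctan_sub_arctan_le (u v : ℝ) : |arctan u - arctan v| ≤ π := by
  have := neg_pi_div_two_lt_arctan u
  have := arctan_lt_pi_div_two u
  have := neg_pi_div_two_lt_arctan v
  have := arctan_lt_pi_div_two v
  rw [abs_le]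
  constructor <;> linarith

lemma tendsto_arctan_div_nhdsGT_zero (c : ℝ) :
    Tendsto (fun ε : ℝ => arctan (c / ε)) (𝓝[>] 0) (𝓝 (π / 2 * Real.sign c)) := by
  have pos {c : ℝ} (hc : 0 < c) : Tendsto (fun ε : ℝ => arctan (c / ε)) (𝓝[>] 0) (𝓝 (π / 2)) := by
    have : Tendsto (fun ε : ℝ => c / ε) (𝓝[>] 0) atTop := by
      simpa [div_eq_mul_inv] using tendsto_inv_nhdsGT_zero.const_mul_atTop hc
    exact (tendsto_arctan_atTop.mono_right nhdsWithin_le_nhds).comp this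
  rcases lt_trichotomy c 0 with hc | rfl | hc
  · simpa [Real.sign_of_neg hc, neg_div, arctan_neg] using (pos (neg_pos.mpr hc)).neg
  · simp [Real.sign_zero]
  · simpa [Real.sign_of_pos hc] using pos hc

lemma sign_sub_sub_sign_sub_div_two {a b : ℝ} (hab : a < b) (t : ℝ) :
    (Real.sign (b - t) - Real.sign (a - t)) / 2 = (Ioo a b).indicator (fun _ => 1) t
      + ({a} : Set ℝ).indicator (fun _ => 1 / 2) t + ({b} : Set ℝ).indicator (fun _ => 1 / 2) t := by
  rcases lt_trichotomy t a with hta | rfl | hat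
  · have htb : t < b := hta.trans hab
    simp [Real.sign_of_pos, hta, htb, hta.ne, htb.ne, not_lt_of_gt hta]
  · simp [Real.sign_of_pos, hab, hab.ne]
  rcases lt_trichotomy t b with htb | rfl | hbt
  · simp [Real.sign_of_pos, Real.sign_of_neg, hat, htb, hat.ne', htb.ne]
  · simp [Real.sign_of_neg, hab, hab.ne']
  · have hat' : a < t := hab.trans hbt
    simp [Real.sign_of_neg, hbt, hat', hbt.ne', hat'.ne', not_lt_of_gt hbt]

lemma integral_sign_sub_sub_sign_sub_div_two (μ : Measure ℝ) [IsFiniteMeasure μ] {a b : ℝ}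
    (hab : a < b) :
    ∫ t, (Real.sign (b - t) - Real.sign (a - t)) / 2 ∂μ
      = μ.real (Ioo a b) + 1 / 2 * μ.real {a} + 1 / 2 * μ.real {b} := by
  have h1 := (integrable_const (1 : ℝ) (μ := μ)).indicator (measurableSet_Ioo (a := a) (b := b))
  have h2 := (integrable_const (1 / 2 : ℝ) (μ := μ)).indicator (measurableSet_singleton a)
  have h3 := (integrable_const (1 / 2 : ℝ) (μ := μ)).indicator (measurableSet_singleton b)
  simp_rw [sign_sub_sub_sign_sub_div_two hab]
  rw [integral_add ?_ h3, integral_add h1 h2]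
  · simp only [integral_indicator_const _ measurableSet_Ioo,
      integral_indicator_const _ (measurableSet_singleton _), smul_eq_mul, mul_one]
    ring
  · exact h1.add h2

lemma tendsto_integral_arctan_div_sub_arctan_div (μ : Measure ℝ) [IsFiniteMeasure μ] (a b : ℝ) :
    Tendsto (fun ε => ∫ t, (arctan ((b - t) / ε) - arctan ((a - t) / ε)) / π ∂μ) (𝓝[>] 0)
      (𝓝 (∫ t, (Real.sign (b - t) - Real.sign (a - t)) / 2 ∂μ)) := by
  refine tendsto_integral_filter_of_dominated_convergence (fun _ => 1)
    (Eventually.of_forall fun ε => (by fun_prop : Continuous _).aestronglyMeasurable)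
    (Eventually.of_forall fun ε => ae_of_all _ fun t => ?_) (integrable_const 1)
    (ae_of_all _ fun t => ?_)
  · rw [norm_div, Real.norm_of_nonneg pi_pos.le, div_le_one pi_pos]
    exact abs_arctan_sub_arctan_le _ _
  · convert ((tendsto_arctan_div_nhdsGT_zero (b - t)).sub
      (tendsto_arctan_div_nhdsGT_zero (a - t))).div_const π using 2
    field_simp

/-- **Stieltjes–Perron inversion formula.**
Let `μ` be a Borel probability measure on `ℝ` and let `w` be its Stieltjes transform,
`w z = ∫ (x - z)⁻¹ dμ(x)` for `z ∈ ℂ \ ℝ`.  Then for all real `a < b`,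
`lim_{ε → 0⁺} (1/π) ∫_a^b Im (w (x + iε)) dx = μ((a,b)) + ½ μ({a}) + ½ μ({b})`. -/
theorem stieltjes_perron_inversion (μ : Measure ℝ) [IsProbabilityMeasure μ]
    (w : ℂ → ℂ) (hw : ∀ z : ℂ, z.im ≠ 0 → w z = ∫ x : ℝ, ((x : ℂ) - z)⁻¹ ∂μ)
    (a b : ℝ) (hab : a < b) :
    Tendsto (fun ε : ℝ => (1 / Real.pi) * ∫ x in a..b, (w (x + ε * Complex.I)).im)
      (nhdsWithin 0 (Set.Ioi 0))
      (nhds ((μ (Set.Ioo a b)).toReal + (1 / 2) * (μ {a}).toReal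
        + (1 / 2) * (μ {b}).toReal)) := by
  have hlim := tendsto_integral_arctan_div_sub_arctan_div μ a b
  rw [integral_sign_sub_sub_sign_sub_div_two μ hab] at hlim
  refine hlim.congr' ?_
  filter_upwards [self_mem_nhdsWithin] with ε (hε : 0 < ε)
  rw [integral_div, ← integral_im_integral_inv_ofReal_sub_add_mul_I μ a b hε, one_div_mul_eq_div]
  congr 1
  refine intervalIntegral.integral_congr fun x _ => ?_
  rw [hw _ (by simpa using hε.ne')]
end

section
/- For every k ≥ 1 the polynomial p_k has exactly k roots, all of which are real and simple (i.e. p_k has k distinct real zeros). -/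
open Polynomial Finset

lemma strictMonoOn_of_adj (z : ℕ → ℝ) (n : ℕ) (h : ∀ j, j + 1 < n → z j < z (j + 1)) :
    ∀ i j, i < j → j < n → z i < z j := by
  intro i j hij hjn
  induction j with
  | zero => omega
  | succ m ih =>
    rcases Nat.lt_succ_iff_lt_or_eq.mp hij with h1 | h1
    · exact (ih h1 (by omega)).trans (h m hjn)
    · subst h1; exact h i hjn

lemma monoOn_of_strict (z : ℕ → ℝ) (n : ℕ) (h : ∀ i j, i < j → j < n → z i < z j) :
    ∀ i j, i ≤ j → j < n → z i ≤ z j := by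
  intro i j hij hjn
  rcases eq_or_lt_of_le hij with rfl | h1
  · exact le_refl _
  · exact (h i j h1 hjn).le

lemma neg_one_sq_pow (n : ℕ) : ((-1 : ℝ) ^ n) ^ 2 = 1 := by
  rw [← pow_mul, mul_comm, pow_mul]; norm_num

lemma sign_eval_prod {n m : ℕ} (hm : m ≤ n) (x : ℕ → ℝ) {c : ℝ} (t : ℝ) (hc : 0 < c)
    (h1 : ∀ j < m, x j < t) (h2 : ∀ j, m ≤ j → j < n → t < x j) :
    0 < (-1 : ℝ) ^ (n - m) * eval t (C c * ∏ j ∈ range n, (X - C (x j))) := by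
  have he : eval t (C c * ∏ j ∈ range n, (X - C (x j))) = c * ∏ j ∈ range n, (t - x j) := by
    simp [eval_prod]
  have hsplit : ∏ j ∈ range n, (t - x j)
      = (∏ j ∈ Ico 0 m, (t - x j)) * ∏ j ∈ Ico m n, (t - x j) := by
    rw [range_eq_Ico, prod_Ico_consecutive _ (Nat.zero_le m) hm]
  have hneg : ∏ j ∈ Ico m n, (t - x j) = (-1 : ℝ) ^ (n - m) * ∏ j ∈ Ico m n, (x j - t) := by
    calc ∏ j ∈ Ico m n, (t - x j) = ∏ j ∈ Ico m n, ((-1) * (x j - t)) := by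
          apply prod_congr rfl; intros; ring
      _ = (-1 : ℝ) ^ (n - m) * ∏ j ∈ Ico m n, (x j - t) := by
          rw [prod_mul_distrib, prod_const, Nat.card_Ico]
  have hp1 : 0 < ∏ j ∈ Ico 0 m, (t - x j) := by
    apply prod_pos; intro j hj; simp only [Finset.mem_Ico] at hj
    linarith [h1 j hj.2]
  have hp2 : 0 < ∏ j ∈ Ico m n, (x j - t) := by
    apply prod_pos; intro j hj; simp only [Finset.mem_Ico] at hj
    linarith [h2 j hj.1 hj.2]
  rw [he, hsplit, hneg]
  have heq : (-1 : ℝ) ^ (n - m) *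
      (c * ((∏ j ∈ Ico 0 m, (t - x j)) * ((-1 : ℝ) ^ (n - m) * ∏ j ∈ Ico m n, (x j - t))))
      = ((-1 : ℝ) ^ (n - m)) ^ 2 *
        (c * ((∏ j ∈ Ico 0 m, (t - x j)) * ∏ j ∈ Ico m n, (x j - t))) := by ring
  rw [heq, neg_one_sq_pow, one_mul]
  exact mul_pos hc (mul_pos hp1 hp2)

lemma exists_root_between {q : ℝ[X]} {s t : ℝ} (hst : s < t)
    (h : eval s q * eval t q < 0) : ∃ z, s < z ∧ z < t ∧ eval z q = 0 := by
  have hc : ContinuousOn (fun u => eval u q) (Set.Icc s t) :=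
    (Polynomial.continuous q).continuousOn
  rcases mul_neg_iff.mp h with ⟨h1, h2⟩ | ⟨h1, h2⟩
  · obtain ⟨z, hz, hfz⟩ := intermediate_value_Ioo' hst.le hc (Set.mem_Ioo.mpr ⟨h2, h1⟩)
    exact ⟨z, hz.1, hz.2, hfz⟩
  · obtain ⟨z, hz, hfz⟩ := intermediate_value_Ioo hst.le hc (Set.mem_Ioo.mpr ⟨h1, h2⟩)
    exact ⟨z, hz.1, hz.2, hfz⟩

lemma prod_X_sub_C_monic (n : ℕ) (w : ℕ → ℝ) :
    (∏ j ∈ range n, (X - C (w j))).Monic :=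
  monic_prod_of_monic _ _ (fun i _ => monic_X_sub_C (w i))

lemma prod_X_sub_C_natDegree (n : ℕ) (w : ℕ → ℝ) :
    (∏ j ∈ range n, (X - C (w j))).natDegree = n := by
  rw [natDegree_prod _ _ (fun i _ => X_sub_C_ne_zero (w i))]
  simp

lemma eq_C_mul_prod {q : ℝ[X]} {n : ℕ} {z : ℕ → ℝ}
    (hdeg : q.natDegree = n) (hq : q ≠ 0)
    (hz : ∀ i j, i < j → j < n → z i < z j) (hroot : ∀ i < n, eval (z i) q = 0) :
    q = C q.leadingCoeff * ∏ j ∈ range n, (X - C (z j)) := by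
  have hinj : ∀ i ∈ range n, ∀ j ∈ range n, i ≠ j → z i ≠ z j := by
    intro i hi j hj hij
    simp only [mem_range] at hi hj
    rcases lt_or_gt_of_ne hij with h | h
    · exact ne_of_lt (hz i j h hj)
    · exact (ne_of_lt (hz j i h hi)).symm
  have hdvd : (∏ j ∈ range n, (X - C (z j))) ∣ q := by
    apply Finset.prod_dvd_of_coprime
    · intro i hi j hj hij
      simp only [Finset.mem_coe] at hi hj
      exact isCoprime_X_sub_C_of_isUnit_sub
        (isUnit_iff_ne_zero.mpr (sub_ne_zero.mpr (hinj i hi j hj hij)))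
    · intro i hi
      exact dvd_iff_isRoot.mpr (hroot i (mem_range.mp hi))
  obtain ⟨u, hu⟩ := hdvd
  have hprodmonic := prod_X_sub_C_monic n z
  have hu0 : u ≠ 0 := by rintro rfl; simp [hu] at hq
  have hdegu : u.natDegree = 0 := by
    have := natDegree_mul (hprodmonic.ne_zero) hu0
    rw [← hu, hdeg, prod_X_sub_C_natDegree] at this
    omega
  obtain ⟨e, rfl⟩ : ∃ e, u = C e := ⟨u.coeff 0, eq_C_of_natDegree_eq_zero hdegu⟩
  have hlead : q.leadingCoeff = e := by
    rw [hu, leadingCoeff_mul, hprodmonic.leadingCoeff, one_mul, leadingCoeff_C]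
  rw [hlead, hu]; ring

open Polynomial Finset Filter

def Jinv (p : ℕ → Polynomial ℝ) (k : ℕ) : Prop :=
  ∃ c d : ℝ, ∃ x y : ℕ → ℝ, 0 < c ∧ 0 < d ∧
    (∀ i j, i < j → j < k → x i < x j) ∧ (∀ i j, i < j → j < k + 1 → y i < y j) ∧
    p k = C c * ∏ j ∈ range k, (X - C (x j)) ∧
    p (k + 1) = C d * ∏ j ∈ range (k + 1), (X - C (y j)) ∧
    ∀ j < k, y j < x j ∧ x j < y (j + 1)

lemma Jinv_step (a b : ℕ → ℝ) (hapos : ∀ k, 0 < a k) (p : ℕ → Polynomial ℝ)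
    (hrec : ∀ k : ℕ, X * p (k + 1) =
      C (a (k + 1)) * p (k + 2) + C (b (k + 1)) * p (k + 1) + C (a k) * p k)
    (k : ℕ) (hJ : Jinv p k) : Jinv p (k + 1) := by
  obtain ⟨c, d, x, y, hc, hd, hx, hy, hpk, hpk1, hint⟩ := hJ
  set q := p (k + 2) with hqdef
  have ha' := hapos (k + 1)
  have hak := hapos k
  have ha'ne : a (k + 1) ≠ 0 := ha'.ne'
  have hdne : d ≠ 0 := hd.ne'
  have hq : C (a (k + 1)) * q = (X - C (b (k + 1))) * p (k + 1) - C (a k) * p k := by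
    linear_combination -hrec k
  have hymono := monoOn_of_strict y (k + 1) hy
  have hyroot : ∀ i < k + 1, eval (y i) (p (k + 1)) = 0 := by
    intro i hi
    rw [hpk1, eval_mul, eval_prod]
    apply mul_eq_zero_of_right
    exact Finset.prod_eq_zero (mem_range.mpr hi) (by simp)
  -- sign of p k at the roots of p (k+1)
  have hsignpk : ∀ i ≤ k, 0 < (-1 : ℝ) ^ (k - i) * eval (y i) (p k) := by
    intro i hik
    rw [hpk]
    apply sign_eval_prod (m := i) (n := k) hik x (y i) hc
    · intro j hj
      have h1 : x j < y (j + 1) := (hint j (by omega)).2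
      have h2 : y (j + 1) ≤ y i := hymono _ _ (by omega) (by omega)
      linarith
    · intro j hij hjk
      have h1 : y i ≤ y j := hymono _ _ hij (by omega)
      linarith [(hint j hjk).1]
  -- sign of q at the roots of p (k+1)
  have hsignq : ∀ i ≤ k, 0 < (-1 : ℝ) ^ (k - i + 1) * eval (y i) q := by
    intro i hik
    have hev := congrArg (eval (y i)) hq
    simp only [eval_mul, eval_sub, eval_C, eval_X] at hev
    rw [hyroot i (by omega), mul_zero, zero_sub] at hev
    have h1 := hsignpk i hik
    have hev2 : a (k + 1) * ((-1 : ℝ) ^ (k - i) * eval (y i) q)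
        = -(a k * ((-1 : ℝ) ^ (k - i) * eval (y i) (p k))) := by
      linear_combination ((-1 : ℝ) ^ (k - i)) * hev
    have h2 : (-1 : ℝ) ^ (k - i) * eval (y i) q < 0 := by nlinarith [mul_pos hak h1]
    rw [pow_succ]
    have h3 : (-1 : ℝ) ^ (k - i) * -1 * eval (y i) q
        = -((-1 : ℝ) ^ (k - i) * eval (y i) q) := by ring
    rw [h3]; linarith
  -- roots in the gaps
  have hgap : ∀ i, i < k → ∃ w, y i < w ∧ w < y (i + 1) ∧ eval w q = 0 := by
    intro i hik
    have h1 := hsignq i (by omega)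
    have h2 := hsignq (i + 1) (by omega)
    have hkk : k - (i + 1) + 1 = k - i := by omega
    rw [hkk] at h2
    have hss : (-1 : ℝ) ^ (k - i + 1) * (-1 : ℝ) ^ (k - i) = -1 := by
      rw [pow_succ]
      linear_combination -neg_one_sq_pow (k - i)
    have hmul : eval (y i) q * eval (y (i + 1)) q < 0 := by
      have h3 := mul_pos h1 h2
      have h4 : ((-1 : ℝ) ^ (k - i + 1) * eval (y i) q) * ((-1 : ℝ) ^ (k - i) * eval (y (i + 1)) q)
          = -(eval (y i) q * eval (y (i + 1)) q) := by
        linear_combination (eval (y i) q * eval (y (i + 1)) q) * hss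
      linarith
    exact exists_root_between (hy i (i + 1) (by omega) (by omega)) hmul
  -- degree and leading coefficient of q
  have hdegpk1 : (p (k + 1)).natDegree = k + 1 := by
    rw [hpk1, natDegree_C_mul hdne, prod_X_sub_C_natDegree]
  have hdegpk : (p k).natDegree = k := by
    rw [hpk, natDegree_C_mul hc.ne', prod_X_sub_C_natDegree]
  have hpk1lead : (p (k + 1)).coeff (k + 1) = d := by
    have h1 : (∏ j ∈ range (k + 1), (X - C (y j))).coeff (k + 1) = 1 := by
      have hm := (prod_X_sub_C_monic (k + 1) y).coeff_natDegree
      rwa [prod_X_sub_C_natDegree (k + 1) y] at hm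
    rw [hpk1, coeff_C_mul, h1, mul_one]
  have hXc : (X * p (k + 1)).coeff (k + 2) = d := by
    rw [show k + 2 = k + 1 + 1 by omega, coeff_X_mul, hpk1lead]
  have h0 : a (k + 1) * q.coeff (k + 2)
      = ((X - C (b (k + 1))) * p (k + 1) - C (a k) * p k).coeff (k + 2) := by
    rw [← coeff_C_mul, hq]
  have hsm : (X - C (b (k + 1))) * p (k + 1)
      = X * p (k + 1) - C (b (k + 1)) * p (k + 1) := by ring
  have hz1 : (p (k + 1)).coeff (k + 2) = 0 :=
    coeff_eq_zero_of_natDegree_lt (by rw [hdegpk1]; omega)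
  have hz2 : (p k).coeff (k + 2) = 0 :=
    coeff_eq_zero_of_natDegree_lt (by rw [hdegpk]; omega)
  rw [hsm, coeff_sub, coeff_sub, hXc, coeff_C_mul, coeff_C_mul, hz1, hz2, mul_zero, mul_zero,
      sub_zero, sub_zero] at h0
  have hql : q.coeff (k + 2) = d / a (k + 1) := by
    rw [eq_div_iff ha'ne]; linarith [h0]
  have hqcne : q.coeff (k + 2) ≠ 0 := by
    rw [hql]; exact (div_pos hd ha').ne'
  have hdegq_le : q.natDegree ≤ k + 2 := by
    calc q.natDegree = (C (a (k + 1)) * q).natDegree := (natDegree_C_mul ha'ne).symm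
      _ = ((X - C (b (k + 1))) * p (k + 1) - C (a k) * p k).natDegree := by rw [hq]
      _ ≤ max ((X - C (b (k + 1))) * p (k + 1)).natDegree ((C (a k) * p k)).natDegree :=
          natDegree_sub_le _ _
      _ ≤ k + 2 := by
          apply max_le
          · refine le_trans (natDegree_mul_le) ?_
            rw [hdegpk1, natDegree_X_sub_C]; omega
          · rw [natDegree_C_mul hak.ne', hdegpk]; omega
  have hdegq : q.natDegree = k + 2 := le_antisymm hdegq_le (le_natDegree_of_ne_zero hqcne)
  have hq0 : q ≠ 0 := fun h => hqcne (by simp [h])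
  have hqlead : q.leadingCoeff = d / a (k + 1) := by
    rw [leadingCoeff, hdegq, hql]
  -- top root
  have htoproot : ∃ w, y k < w ∧ eval w q = 0 := by
    have htend : Tendsto (fun u => eval u q) atTop atTop := by
      apply tendsto_atTop_of_leadingCoeff_nonneg
      · rw [degree_eq_natDegree hq0, hdegq]; exact_mod_cast (by omega : 0 < k + 2)
      · rw [hqlead]; positivity
    obtain ⟨T, hT1, hT2⟩ := ((eventually_gt_atTop (y k)).and (htend.eventually_gt_atTop 0)).exists
    have hsk := hsignq k le_rfl
    rw [Nat.sub_self] at hsk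
    norm_num at hsk
    have hmul : eval (y k) q * eval T q < 0 := mul_neg_of_neg_of_pos hsk hT2
    obtain ⟨w, h1, h2, h3⟩ := exists_root_between hT1 hmul
    exact ⟨w, h1, h3⟩
  -- bottom root
  have hbotroot : ∃ w, w < y 0 ∧ eval w q = 0 := by
    have hene : ((-1 : ℝ) ^ k) ≠ 0 := pow_ne_zero _ (by norm_num)
    set r : Polynomial ℝ := (C ((-1 : ℝ) ^ k) * q).comp (-X) with hr
    have hnegX : (-X : Polynomial ℝ).natDegree = 1 := by simp
    have hrdeg : r.natDegree = k + 2 := by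
      rw [hr, natDegree_comp, hnegX, natDegree_C_mul hene, hdegq, mul_one]
    have hr0 : r ≠ 0 := by
      intro h
      rw [h, natDegree_zero] at hrdeg
      omega
    have hrlead : r.leadingCoeff = d / a (k + 1) := by
      rw [hr, leadingCoeff_comp (by rw [hnegX]; omega), natDegree_C_mul hene, hdegq,
          leadingCoeff_mul, leadingCoeff_C, hqlead]
      have hne : (-X : Polynomial ℝ).leadingCoeff = -1 := by simp
      rw [hne]
      have hev : ((-1 : ℝ) ^ k) * ((-1 : ℝ) ^ (k + 2)) = 1 := by
        rw [← pow_add]; exact Even.neg_one_pow ⟨k + 1, by ring⟩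
      linear_combination (d / a (k + 1)) * hev
    have htend : Tendsto (fun u => eval u r) atTop atTop := by
      apply tendsto_atTop_of_leadingCoeff_nonneg
      · rw [degree_eq_natDegree hr0, hrdeg]; exact_mod_cast (by omega : 0 < k + 2)
      · rw [hrlead]; positivity
    obtain ⟨s, hs1, hs2⟩ := ((eventually_gt_atTop (-(y 0))).and (htend.eventually_gt_atTop 0)).exists
    have hevr : eval s r = (-1 : ℝ) ^ k * eval (-s) q := by
      rw [hr]; simp [eval_comp]
    rw [hevr] at hs2
    have h0' := hsignq 0 (Nat.zero_le k)
    rw [Nat.sub_zero] at h0'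
    have hss : (-1 : ℝ) ^ k * (-1 : ℝ) ^ (k + 1) = -1 := by
      rw [pow_succ]
      linear_combination -neg_one_sq_pow k
    have hmul : eval (-s) q * eval (y 0) q < 0 := by
      have h3 := mul_pos hs2 h0'
      have h4 : ((-1 : ℝ) ^ k * eval (-s) q) * ((-1 : ℝ) ^ (k + 1) * eval (y 0) q)
          = -(eval (-s) q * eval (y 0) q) := by
        linear_combination (eval (-s) q * eval (y 0) q) * hss
      linarith
    obtain ⟨w, hw1, hw2, hw3⟩ := exists_root_between (show -s < y 0 by linarith) hmul
    exact ⟨w, hw2, hw3⟩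
  -- assemble the new roots
  obtain ⟨tb, htb1, htb2⟩ := hbotroot
  obtain ⟨tt, htt1, htt2⟩ := htoproot
  have hgap' : ∀ i, ∃ w, i < k → y i < w ∧ w < y (i + 1) ∧ eval w q = 0 := by
    intro i
    by_cases h : i < k
    · obtain ⟨w, hw⟩ := hgap i h; exact ⟨w, fun _ => hw⟩
    · exact ⟨0, fun h' => absurd h' h⟩
  choose g hg using hgap'
  set z : ℕ → ℝ := fun j => if j = 0 then tb else if j ≤ k then g (j - 1) else tt with hzdef
  have hz0 : z 0 = tb := by simp [hzdef]
  have hzmid : ∀ j, 1 ≤ j → j ≤ k → z j = g (j - 1) := by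
    intro j h1 h2
    simp only [hzdef]
    rw [if_neg (by omega), if_pos h2]
  have hztop : z (k + 1) = tt := by
    simp only [hzdef]
    rw [if_neg (by omega), if_neg (by omega)]
  have hnewint : ∀ j < k + 1, z j < y j ∧ y j < z (j + 1) := by
    intro j hj
    constructor
    · rcases Nat.eq_zero_or_pos j with rfl | hj0
      · rw [hz0]; exact htb1
      · rw [hzmid j hj0 (by omega)]
        have h1 := (hg (j - 1) (by omega)).2.1
        have h2 : j - 1 + 1 = j := by omega
        rwa [h2] at h1
    · by_cases hjk : j < k
      · rw [hzmid (j + 1) (by omega) (by omega)]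
        have h1 := (hg (j + 1 - 1) (by omega)).1
        have h2 : j + 1 - 1 = j := by omega
        rwa [h2] at h1
      · have hje : j = k := by omega
        subst hje
        rw [hztop]; exact htt1
  have hzroot : ∀ j < k + 2, eval (z j) q = 0 := by
    intro j hj
    rcases Nat.eq_zero_or_pos j with rfl | hj0
    · rw [hz0]; exact htb2
    · by_cases hjk : j ≤ k
      · rw [hzmid j hj0 hjk]
        exact (hg (j - 1) (by omega)).2.2
      · have hje : j = k + 1 := by omega
        subst hje
        rw [hztop]; exact htt2
  have hzadj : ∀ j, j + 1 < k + 2 → z j < z (j + 1) := by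
    intro j hj
    have h1 := hnewint j (by omega)
    linarith [h1.1, h1.2]
  have hzmono := strictMonoOn_of_adj z (k + 2) hzadj
  have hqfac : q = C q.leadingCoeff * ∏ j ∈ range (k + 2), (X - C (z j)) :=
    eq_C_mul_prod hdegq hq0 hzmono hzroot
  exact ⟨d, d / a (k + 1), y, z, hd, div_pos hd ha', hy, hzmono, hpk1,
    by rw [← hqlead]; exact hqfac, hnewint⟩

lemma Jinv_all (a b : ℕ → ℝ) (hapos : ∀ k, 0 < a k) (p : ℕ → Polynomial ℝ)
    (hp0 : p 0 = 1) (hp1 : C (a 0) * p 1 = X - C (b 0))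
    (hrec : ∀ k : ℕ, X * p (k + 1) =
      C (a (k + 1)) * p (k + 2) + C (b (k + 1)) * p (k + 1) + C (a k) * p k) :
    ∀ k, Jinv p k := by
  intro k
  induction k with
  | zero =>
    refine ⟨1, (a 0)⁻¹, fun _ => 0, fun _ => b 0, one_pos, inv_pos.mpr (hapos 0),
      by omega, by omega, by rw [hp0]; simp, ?_, by omega⟩
    have h1 : p 1 = C (a 0)⁻¹ * (C (a 0) * p 1) := by
      rw [← mul_assoc, ← C_mul, inv_mul_cancel₀ (hapos 0).ne', C_1, one_mul]
    rw [h1, hp1]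
    simp [prod_range_one]
  | succ n ih => exact Jinv_step a b hapos p hrec n ih

lemma roots_of_fac {n : ℕ} {e : ℝ} (he : e ≠ 0) (z : ℕ → ℝ) :
    (C e * ∏ j ∈ range n, (X - C (z j))).roots = (range n).val.map z := by
  rw [roots_C_mul _ he, roots_prod _ _ (prod_X_sub_C_monic n z).ne_zero]
  simp [roots_X_sub_C]
/-- For every `k ≥ 1`, the polynomial `p_k` generated by the three-term recurrence has exactly
`k` roots, all real and simple: its multiset of real roots has cardinality `k` (equal to its
degree, so all roots are real) and has no duplicates (so all roots are simple). -/
theorem zeros_real_simple (a b : ℕ → ℝ) (hapos : ∀ k, 0 < a k)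
    (p : ℕ → Polynomial ℝ)
    (hp0 : p 0 = 1) (hp1 : C (a 0) * p 1 = X - C (b 0))
    (hrec : ∀ k : ℕ, X * p (k + 1) =
      C (a (k + 1)) * p (k + 2) + C (b (k + 1)) * p (k + 1) + C (a k) * p k) :
    ∀ k : ℕ, Multiset.card (p (k + 1)).roots = k + 1 ∧ (p (k + 1)).roots.Nodup := by
  have hJ := Jinv_all a b hapos p hp0 hp1 hrec
  intro k
  obtain ⟨c, d, x, y, hc, hd, hx, hy, hpk, hpk1, hint⟩ := hJ k
  rw [hpk1, roots_of_fac hd.ne' y]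
  constructor
  · simp
  · apply Multiset.Nodup.map_on ?_ (range (k + 1)).nodup
    intro i hi j hj hij
    rw [Finset.mem_val, mem_range] at hi hj
    by_contra hne
    rcases lt_or_gt_of_ne hne with h | h
    · exact absurd hij (ne_of_lt (hy i j h hj))
    · exact absurd hij.symm (ne_of_lt (hy j i h hi))
end

section
/- Let μ be a Borel probability measure with all moments finite and infinite support, and let (a_k, b_k) be the three-term recurrence coefficients of its orthonormal polynomials. If the support of μ is unbounded, then the Jacobi operator J with these coefficients is unbounded: there is no constant C such that ‖J v‖ ≤ C ‖v‖ for all finitely supported v ∈ ℓ²(ℤ≥0). -/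
open MeasureTheory Polynomial

noncomputable section

instance : Fact ((1 : ENNReal) ≤ 2) := ⟨one_le_two⟩

/-- The topological support of a Borel measure on `ℝ`. -/
def measSupport (μ : Measure ℝ) : Set ℝ := {x : ℝ | ∀ U ∈ nhds x, μ U ≠ 0}

/-- The Hilbert space `ℓ²(ℤ≥0)`. -/
abbrev JacobiH : Type := lp (fun _ : ℕ => ℂ) 2

/-- The submodule of finitely supported elements of `ℓ²(ℤ≥0)`. -/
def finSupp : Submodule ℂ JacobiH where
  carrier := {f | (Function.support (f : ℕ → ℂ)).Finite}
  zero_mem' := by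
    have : Function.support ((0 : JacobiH) : ℕ → ℂ) = ∅ := by
      exact Function.support_eq_empty_iff.mpr (lp.coeFn_zero _ _)
    show (Function.support ((0 : JacobiH) : ℕ → ℂ)).Finite
    rw [this]; exact Set.finite_empty
  add_mem' := by
    intro f g hf hg
    refine (hf.union hg).subset fun x hx => ?_
    by_contra hc
    simp only [Set.mem_union, Function.mem_support, not_or, not_not] at hc
    exact hx (by simp only [Function.mem_support, not_not, lp.coeFn_add, Pi.add_apply,
      hc.1, hc.2, add_zero])
  smul_mem' := by
    intro c f hf
    refine hf.subset fun x hx => ?_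
    by_contra hc
    simp only [Function.mem_support, not_not] at hc
    exact hx (by simp only [Function.mem_support, not_not, lp.coeFn_smul, Pi.smul_apply,
      hc, smul_zero])

/-- The formal Jacobi (tridiagonal) expression with coefficients `a`, `b`, using the
conventions `a_{-1} = 0`, `v_{-1} = 0`. -/
def jacobiApply (a b : ℕ → ℝ) (v : ℕ → ℂ) : ℕ → ℂ
  | 0 => (a 0 : ℂ) * v 1 + (b 0 : ℂ) * v 0
  | (k + 1) => (a (k + 1) : ℂ) * v (k + 2) + (b (k + 1) : ℂ) * v (k + 1) + (a k : ℂ) * v k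

/-!
Write `c m = (∫ x ^ m p n dμ)ₙ` for the coefficients of `x ^ m` in the orthonormal basis `(p n)`;
only finitely many are nonzero since the recurrence puts `x ^ m` in the span of `p 0, …, p m`.
Multiplying the expansion of `x ^ m` by `x` and using the recurrence gives `c (m + 1) = J (c m)`,
and Parseval gives `‖c m‖² = ∫ x ^ (2 m) dμ`. A bound `‖J v‖ ≤ K ‖v‖` therefore yields
`∫ x ^ (2 m) dμ ≤ K ^ (2 m)` for all `m`, which forces `μ` to live on `[-K, K]`: a ball of points
`|x| ≥ s > K` around a point of the support would carry mass at most `(K / s) ^ (2 m) → 0`.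
-/

section PolynomialIntegral

variable {μ : Measure ℝ} (hmom : ∀ m : ℕ, Integrable (fun x : ℝ => |x| ^ m) μ)
include hmom

theorem integrable_eval_of_integrable_abs_pow (q : ℝ[X]) :
    Integrable (fun x => q.eval x) μ := by
  simp_rw [eval_eq_sum_range]
  refine integrable_finsetSum _ fun i _ => Integrable.const_mul ?_ _
  exact (hmom i).mono' (continuous_pow i).aestronglyMeasurable
    (ae_of_all _ fun x => by simp)

variable (μ) in
def polyIntegral : ℝ[X] →ₗ[ℝ] ℝ where
  toFun q := ∫ x, q.eval x ∂μ
  map_add' q r := by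
    simp only [eval_add]
    exact integral_add (integrable_eval_of_integrable_abs_pow hmom q)
      (integrable_eval_of_integrable_abs_pow hmom r)
  map_smul' c q := by simp only [eval_smul, smul_eq_mul, integral_const_mul, RingHom.id_apply]

theorem polyIntegral_apply (q : ℝ[X]) :
    polyIntegral μ hmom q = ∫ x, q.eval x ∂μ := rfl

end PolynomialIntegral

section Orthonormal

open Finset

variable {μ : Measure ℝ} {p : ℕ → ℝ[X]} (hmom : ∀ m : ℕ, Integrable (fun x : ℝ => |x| ^ m) μ)
    (horth : ∀ n m, ∫ x, (p n).eval x * (p m).eval x ∂μ = if n = m then 1 else 0)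
include hmom horth

theorem integral_eval_sum_smul_mul_eval (s : Finset ℕ) (d : ℕ → ℝ) (k : ℕ) :
    ∫ x, (∑ j ∈ s, d j • p j).eval x * (p k).eval x ∂μ = if k ∈ s then d k else 0 := by
  simp_rw [← eval_mul, ← polyIntegral_apply hmom, sum_mul, map_sum, smul_mul_assoc, map_smul,
    polyIntegral_apply, eval_mul, horth, smul_eq_mul, mul_ite, mul_one, mul_zero, sum_ite_eq']

theorem integral_eval_mul_eval_eq_zero_of_mem_span
    {N k : ℕ} (hk : N ≤ k) {q : ℝ[X]} (hq : q ∈ Submodule.span ℝ (p '' range N)) :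
    ∫ x, q.eval x * (p k).eval x ∂μ = 0 := by
  obtain ⟨d, rfl⟩ := (Submodule.mem_span_image_finset_iff_exists_fun' ℝ).mp hq
  rw [integral_eval_sum_smul_mul_eval hmom horth, if_neg (by simpa using hk)]

theorem integral_eval_sq_eq_sum_of_mem_span
    {N : ℕ} {q : ℝ[X]} (hq : q ∈ Submodule.span ℝ (p '' range N)) :
    ∫ x, q.eval x ^ 2 ∂μ = ∑ k ∈ range N, (∫ x, q.eval x * (p k).eval x ∂μ) ^ 2 := by
  obtain ⟨d, rfl⟩ := (Submodule.mem_span_image_finset_iff_exists_fun' ℝ).mp hq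
  set q := ∑ j ∈ range N, d j • p j
  have hcoeff : ∀ k ∈ range N, ∫ x, q.eval x * (p k).eval x ∂μ = d k :=
    fun k hk => by rw [integral_eval_sum_smul_mul_eval hmom horth, if_pos hk]
  calc ∫ x, q.eval x ^ 2 ∂μ = polyIntegral μ hmom (q * ∑ j ∈ range N, d j • p j) := by
        simp only [polyIntegral_apply, eval_mul, sq]; rfl
    _ = ∑ k ∈ range N, d k * ∫ x, q.eval x * (p k).eval x ∂μ := by
        simp_rw [mul_sum, map_sum, mul_smul_comm, map_smul, polyIntegral_apply, eval_mul,
          smul_eq_mul]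
    _ = _ := sum_congr rfl fun k hk => by rw [hcoeff k hk, sq]

end Orthonormal

section ThreeTermRecurrence

open Finset Submodule

variable {p : ℕ → ℝ[X]} {a b : ℕ → ℝ}
    (hrec : ∀ k : ℕ, X * p (k + 1) =
      C (a (k + 1)) * p (k + 2) + C (b (k + 1)) * p (k + 1) + C (a k) * p k)
    (hrec0 : X * p 0 = C (a 0) * p 1 + C (b 0) * p 0)
include hrec hrec0

theorem X_mul_mem_span_of_mem_span
    {N : ℕ} {q : ℝ[X]} (hq : q ∈ span ℝ (p '' range N)) :
    X * q ∈ span ℝ (p '' range (N + 1)) := by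
  have hp : ∀ j ≤ N, p j ∈ span ℝ (p '' range (N + 1)) := fun j hj =>
    subset_span ⟨j, by simpa [Nat.lt_succ_iff] using hj, rfl⟩
  have hgen : ∀ j < N, X * p j ∈ span ℝ (p '' range (N + 1)) := by
    rintro (_ | j) hj
    · rw [hrec0, C_mul', C_mul']
      exact add_mem (smul_mem _ _ (hp 1 hj)) (smul_mem _ _ (hp 0 (Nat.zero_le N)))
    · rw [hrec j, C_mul', C_mul', C_mul']
      exact add_mem (add_mem (smul_mem _ _ (hp (j + 2) hj)) (smul_mem _ _ (hp (j + 1) hj.le)))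
        (smul_mem _ _ (hp j (by omega)))
  change q ∈ (span ℝ (p '' range (N + 1))).comap (LinearMap.mulLeft ℝ X)
  refine span_le.mpr ?_ hq
  rintro _ ⟨j, hj, rfl⟩
  exact hgen j (by simpa using hj)

theorem X_pow_mem_span (hdeg0 : (p 0).degree = 0) (m : ℕ) :
    X ^ m ∈ span ℝ (p '' range (m + 1)) := by
  induction m with
  | zero =>
    have hc : (p 0).coeff 0 ≠ 0 := coeff_ne_zero_of_eq_degree hdeg0
    have h1 : (1 : ℝ[X]) = ((p 0).coeff 0)⁻¹ • p 0 := by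
      rw [eq_C_of_degree_eq_zero hdeg0, smul_C, smul_eq_mul, coeff_C_zero, inv_mul_cancel₀ hc,
        C_1]
    rw [pow_zero, h1]
    exact smul_mem _ _ (subset_span ⟨0, by simp, rfl⟩)
  | succ m ih =>
    rw [pow_succ']
    exact X_mul_mem_span_of_mem_span hrec hrec0 ih

end ThreeTermRecurrence

section MomentCoefficients

open Finset

variable {μ : Measure ℝ} {p : ℕ → ℝ[X]} {a b : ℕ → ℝ}

def momentCoeff (μ : Measure ℝ) (p : ℕ → ℝ[X]) (m n : ℕ) : ℝ :=
  ∫ x, x ^ m * (p n).eval x ∂μ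

theorem momentCoeff_eq_polyIntegral (hmom : ∀ m : ℕ, Integrable (fun x : ℝ => |x| ^ m) μ)
    (m n : ℕ) : momentCoeff μ p m n = polyIntegral μ hmom (X ^ m * p n) := by
  simp [momentCoeff, polyIntegral_apply]

theorem momentCoeff_succ (hmom : ∀ m : ℕ, Integrable (fun x : ℝ => |x| ^ m) μ)
    (hrec : ∀ k : ℕ, X * p (k + 1) =
      C (a (k + 1)) * p (k + 2) + C (b (k + 1)) * p (k + 1) + C (a k) * p k)
    (hrec0 : X * p 0 = C (a 0) * p 1 + C (b 0) * p 0) (m k : ℕ) :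
    (momentCoeff μ p (m + 1) k : ℂ) = jacobiApply a b (fun n => momentCoeff μ p m n) k := by
  rw [momentCoeff_eq_polyIntegral hmom, pow_succ, mul_assoc]
  cases k with
  | zero =>
    simp only [hrec0, jacobiApply, mul_add, C_mul', mul_smul_comm, map_add, map_smul,
      ← momentCoeff_eq_polyIntegral hmom, smul_eq_mul]
    push_cast; rfl
  | succ k =>
    simp only [hrec k, jacobiApply, mul_add, C_mul', mul_smul_comm, map_add, map_smul,
      ← momentCoeff_eq_polyIntegral hmom, smul_eq_mul]
    push_cast; rfl

variable (hmom : ∀ m : ℕ, Integrable (fun x : ℝ => |x| ^ m) μ)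
    (horth : ∀ n m, ∫ x, (p n).eval x * (p m).eval x ∂μ = if n = m then 1 else 0)
    (hdeg0 : (p 0).degree = 0)
    (hrec : ∀ k : ℕ, X * p (k + 1) =
      C (a (k + 1)) * p (k + 2) + C (b (k + 1)) * p (k + 1) + C (a k) * p k)
    (hrec0 : X * p 0 = C (a 0) * p 1 + C (b 0) * p 0)
include hmom horth hdeg0 hrec hrec0

theorem momentCoeff_eq_zero_of_lt {m n : ℕ} (h : m < n) : momentCoeff μ p m n = 0 := by
  simpa [momentCoeff] using integral_eval_mul_eval_eq_zero_of_mem_span hmom horth h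
    (X_pow_mem_span hrec hrec0 hdeg0 m)

theorem sum_momentCoeff_sq (m : ℕ) :
    ∑ n ∈ range (m + 1), momentCoeff μ p m n ^ 2 = ∫ x, x ^ (2 * m) ∂μ := by
  simpa [momentCoeff, ← pow_mul, mul_comm m 2] using
    (integral_eval_sq_eq_sum_of_mem_span hmom horth (X_pow_mem_span hrec hrec0 hdeg0 m)).symm

end MomentCoefficients

theorem measSupport_subset_closedBall_of_integral_pow_le {μ : Measure ℝ} [IsFiniteMeasure μ]
    {R : ℝ} (hR : 0 ≤ R) (hint : ∀ m : ℕ, Integrable (fun x : ℝ => x ^ (2 * m)) μ)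
    (hle : ∀ m : ℕ, ∫ x, x ^ (2 * m) ∂μ ≤ R ^ (2 * m)) :
    measSupport μ ⊆ Metric.closedBall 0 R := by
  intro y hy
  rw [mem_closedBall_zero_iff, Real.norm_eq_abs]
  by_contra! hRy
  obtain ⟨s, hRs, hsy⟩ := exists_between hRy
  have hs : 0 < s := hR.trans_lt hRs
  set B := Metric.ball y (|y| - s)
  have hB : ∀ x ∈ B, s ≤ |x| := fun x hx => by
    rw [Metric.mem_ball, Real.dist_eq] at hx
    linarith [abs_sub_abs_le_abs_sub y x, abs_sub_comm y x]
  have hBpos : 0 < μ.real B :=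
    ENNReal.toReal_pos (hy _ (Metric.ball_mem_nhds y (by linarith))) (measure_ne_top μ _)
  have hmass : ∀ m : ℕ, μ.real B ≤ ((R / s) ^ 2) ^ m := fun m => by
    have hpow_le : (s ^ 2) ^ m * μ.real B ≤ (R ^ 2) ^ m :=
      calc (s ^ 2) ^ m * μ.real B
          ≤ ∫ x in B, x ^ (2 * m) ∂μ := by
            refine setIntegral_ge_of_const_le_real measurableSet_ball (measure_ne_top μ _)
              (fun x hx => ?_) (hint m).integrableOn
            rw [pow_mul, ← sq_abs x]
            exact pow_le_pow_left₀ (by positivity) (pow_le_pow_left₀ hs.le (hB x hx) 2) m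
        _ ≤ ∫ x, x ^ (2 * m) ∂μ :=
            setIntegral_le_integral (hint m) (ae_of_all _ fun x => (even_two_mul m).pow_nonneg x)
        _ ≤ (R ^ 2) ^ m := by rw [← pow_mul]; exact hle m
    rw [div_pow, div_pow, le_div_iff₀ (by positivity), mul_comm]
    exact hpow_le
  have hratio : (R / s) ^ 2 < 1 := by
    rw [sq_lt_one_iff₀ (div_nonneg hR hs.le), div_lt_one hs]
    exact hRs
  have hlim := tendsto_pow_atTop_nhds_zero_of_lt_one (by positivity) hratio
  exact hBpos.not_ge (ge_of_tendsto' hlim hmass)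

theorem lp_two_norm_sq_eq_sum {ι : Type*} {E : ι → Type*} [∀ i, NormedAddCommGroup (E i)]
    (f : lp E 2) (s : Finset ι) (hf : ∀ i ∉ s, f i = 0) :
    ‖f‖ ^ 2 = ∑ i ∈ s, ‖f i‖ ^ 2 := by
  have h := lp.norm_rpow_eq_tsum (by norm_num : 0 < (2 : ENNReal).toReal) f
  simp only [ENNReal.toReal_ofNat, Real.rpow_two] at h
  rw [h, tsum_eq_sum fun i hi => by simp [hf i hi]]

theorem exists_mem_finSupp_coe_eq {c : ℕ → ℂ} (hc : (Function.support c).Finite) :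
    ∃ v : JacobiH, v ∈ finSupp ∧ ⇑v = c :=
  ⟨⟨c, (memℓp_zero hc).of_exponent_ge zero_le⟩, hc, rfl⟩

section JacobiOperator

open Finset

variable {μ : Measure ℝ} {p : ℕ → ℝ[X]} {a b : ℕ → ℝ}
    (hmom : ∀ m : ℕ, Integrable (fun x : ℝ => |x| ^ m) μ)
    (horth : ∀ n m, ∫ x, (p n).eval x * (p m).eval x ∂μ = if n = m then 1 else 0)
    (hdeg0 : (p 0).degree = 0)
    (hrec : ∀ k : ℕ, X * p (k + 1) =
      C (a (k + 1)) * p (k + 2) + C (b (k + 1)) * p (k + 1) + C (a k) * p k)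
    (hrec0 : X * p 0 = C (a 0) * p 1 + C (b 0) * p 0)
include hmom horth hdeg0 hrec hrec0

theorem norm_sq_eq_integral_pow_of_coe_eq_momentCoeff {m : ℕ} {f : JacobiH}
    (hf : ∀ k, f k = momentCoeff μ p m k) : ‖f‖ ^ 2 = ∫ x, x ^ (2 * m) ∂μ := by
  have hvanish : ∀ k ∉ range (m + 1), f k = 0 := fun k hk => by
    rw [hf, momentCoeff_eq_zero_of_lt hmom horth hdeg0 hrec hrec0 (by simpa using hk),
      Complex.ofReal_zero]
  rw [lp_two_norm_sq_eq_sum f _ hvanish, ← sum_momentCoeff_sq hmom horth hdeg0 hrec hrec0]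
  simp only [hf, Complex.norm_real, Real.norm_eq_abs, sq_abs]

theorem exists_domain_coe_eq_momentCoeff (J : JacobiH →ₗ.[ℂ] JacobiH) (hdom : J.domain = finSupp)
    (m : ℕ) : ∃ w : J.domain, ∀ k, (w : JacobiH) k = momentCoeff μ p m k := by
  have hsupp : (Function.support fun k => (momentCoeff μ p m k : ℂ)).Finite :=
    (range (m + 1)).finite_toSet.subset <| Function.support_subset_iff'.mpr fun k hk => by
      simp [momentCoeff_eq_zero_of_lt hmom horth hdeg0 hrec hrec0 (by simpa using hk)]
  obtain ⟨v, hv, hcoe⟩ := exists_mem_finSupp_coe_eq hsupp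
  exact ⟨⟨v, hdom ▸ hv⟩, fun k => congrFun hcoe k⟩

theorem integral_pow_two_mul_succ_le (J : JacobiH →ₗ.[ℂ] JacobiH) (hdom : J.domain = finSupp)
    (hact : ∀ (v : J.domain) (k : ℕ),
      (J v : ℕ → ℂ) k = jacobiApply a b ((v : JacobiH) : ℕ → ℂ) k)
    {K : ℝ} (hK : ∀ v : J.domain, ‖J v‖ ≤ K * ‖(v : JacobiH)‖) (m : ℕ) :
    ∫ x, x ^ (2 * (m + 1)) ∂μ ≤ K ^ 2 * ∫ x, x ^ (2 * m) ∂μ := by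
  obtain ⟨w, hw⟩ := exists_domain_coe_eq_momentCoeff hmom horth hdeg0 hrec hrec0 J hdom m
  have hJw : ∀ k, (J w : JacobiH) k = momentCoeff μ p (m + 1) k := fun k => by
    rw [hact, momentCoeff_succ hmom hrec hrec0]
    exact congrArg (jacobiApply a b · k) (funext hw)
  rw [← norm_sq_eq_integral_pow_of_coe_eq_momentCoeff hmom horth hdeg0 hrec hrec0 hJw,
    ← norm_sq_eq_integral_pow_of_coe_eq_momentCoeff hmom horth hdeg0 hrec hrec0 hw, ← mul_pow]
  exact pow_le_pow_left₀ (norm_nonneg _) (hK w) 2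

end JacobiOperator

theorem jacobi_unbounded_of_unbounded_support_general (μ : Measure ℝ) [IsProbabilityMeasure μ]
    (hmom : ∀ m : ℕ, Integrable (fun x : ℝ => |x| ^ m) μ)
    (hunb : ¬ Bornology.IsBounded (measSupport μ))
    (p : ℕ → Polynomial ℝ)
    (hdeg : ∀ n, (p n).degree = n)
    (horth : ∀ n m, ∫ x, (p n).eval x * (p m).eval x ∂μ = if n = m then 1 else 0)
    (a b : ℕ → ℝ)
    (hrec : ∀ k : ℕ, X * p (k + 1) =
      C (a (k + 1)) * p (k + 2) + C (b (k + 1)) * p (k + 1) + C (a k) * p k)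
    (hrec0 : X * p 0 = C (a 0) * p 1 + C (b 0) * p 0)
    (J : JacobiH →ₗ.[ℂ] JacobiH) (hdom : J.domain = finSupp)
    (hact : ∀ (v : J.domain) (k : ℕ),
      (J v : ℕ → ℂ) k = jacobiApply a b ((v : JacobiH) : ℕ → ℂ) k) :
    ¬ ∃ C : ℝ, ∀ v : J.domain, ‖J v‖ ≤ C * ‖(v : JacobiH)‖ := by
  rintro ⟨K, hK⟩
  have hdeg0 : (p 0).degree = 0 := by simpa using hdeg 0
  have hint : ∀ m : ℕ, Integrable (fun x : ℝ => x ^ (2 * m)) μ := fun m => by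
    simpa using integrable_eval_of_integrable_abs_pow hmom (X ^ (2 * m))
  have hmoment : ∀ m : ℕ, ∫ x, x ^ (2 * m) ∂μ ≤ |K| ^ (2 * m) := by
    intro m
    induction m with
    | zero => simp
    | succ m ih =>
      calc ∫ x, x ^ (2 * (m + 1)) ∂μ ≤ K ^ 2 * ∫ x, x ^ (2 * m) ∂μ :=
            integral_pow_two_mul_succ_le hmom horth hdeg0 hrec hrec0 J hdom hact hK m
        _ ≤ |K| ^ 2 * |K| ^ (2 * m) := by rw [sq_abs]; gcongr
        _ = |K| ^ (2 * (m + 1)) := by ring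
  exact hunb (Metric.isBounded_closedBall.subset
    (measSupport_subset_closedBall_of_integral_pow_le (abs_nonneg K) hint hmoment))

/-- Let `μ` be a Borel probability measure with all moments finite and infinite support, and
let `(a_k, b_k)` be the three-term recurrence coefficients of its orthonormal polynomials.
If the support of `μ` is unbounded, then the Jacobi operator `J` with these coefficients is
unbounded: there is no constant `C` with `‖J v‖ ≤ C ‖v‖` for all finitely supported `v`. -/
theorem jacobi_unbounded_of_unbounded_support (μ : Measure ℝ) [IsProbabilityMeasure μ]
    (hmom : ∀ m : ℕ, Integrable (fun x : ℝ => |x| ^ m) μ)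
    (hsupp : (measSupport μ).Infinite)
    (hunb : ¬ Bornology.IsBounded (measSupport μ))
    (p : ℕ → Polynomial ℝ)
    (hdeg : ∀ n, (p n).degree = n)
    (hlead : ∀ n, 0 < (p n).leadingCoeff)
    (horth : ∀ n m, ∫ x, (p n).eval x * (p m).eval x ∂μ = if n = m then 1 else 0)
    (a b : ℕ → ℝ) (hapos : ∀ k, 0 < a k)
    (hrec : ∀ k : ℕ, X * p (k + 1) =
      C (a (k + 1)) * p (k + 2) + C (b (k + 1)) * p (k + 1) + C (a k) * p k)
    (hrec0 : X * p 0 = C (a 0) * p 1 + C (b 0) * p 0)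
    (J : JacobiH →ₗ.[ℂ] JacobiH) (hdom : J.domain = finSupp)
    (hact : ∀ (v : J.domain) (k : ℕ),
      (J v : ℕ → ℂ) k = jacobiApply a b ((v : JacobiH) : ℕ → ℂ) k) :
    ¬ ∃ C : ℝ, ∀ v : J.domain, ‖J v‖ ≤ C * ‖(v : JacobiH)‖ :=
  jacobi_unbounded_of_unbounded_support_general μ hmom hunb p hdeg horth a b hrec hrec0 J hdom hact
end
end
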